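/- Let M : A ⥤ Type be a functor, a an object of A, and S : J ⥤ Under a a functor from a small category J (a cone with vertex a). Then the following are equivalent: (i) the canonical map M.obj a → (S ⋙ Under.forget a ⋙ M).sections, sending m to the family j ↦ M.map ((S.obj j).hom) m, is a bijection; (ii) precomposition with S is a bijection from the set of functors L : Under a ⥤ El(M) with L ⋙ π_M = Under.forget a to the set of functors K : J ⥤ El(M) with K ⋙ π_M = S ⋙ Under.forget a. -/

import Mathlib

open CategoryTheory Limits

/-!
A lift of `F : C ⥤ A` along `π M` is the same thing as a section of `F ⋙ M`: over each `F.obj c`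
one picks an element, compatibly with the morphisms. Under this correspondence precomposition
with `S` becomes restriction of sections along `S`. On the other side, `Under a` has the initial
object `𝟙 a`, so a section of `Under.forget a ⋙ M` is determined by its value in `M.obj a`, and
the canonical map is again restriction of sections along `S`. Hence both conditions say that
restriction of sections along `S` is bijective.
-/

/-- The canonical map from `M.obj a` to the sections of `S ⋙ Under.forget a ⋙ M`,
for a cone `S : J ⥤ Under a` with vertex `a`, sending `m` to the family
`j ↦ M.map (S.obj j).hom m`. -/
def canonicalSectionsMap {A : Type*} [Category A] {J : Type*} [SmallCategory J]
    (M : A ⥤ Type*) {a : A} (S : J ⥤ Under a) (m : M.obj a) :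
    (S ⋙ Under.forget a ⋙ M).sections :=
  ⟨fun j => M.map (S.obj j).hom m, by
    intro j j' f
    change M.map (S.map f).right (M.map (S.obj j).hom m) = M.map (S.obj j').hom m
    rw [← Functor.map_comp_apply, Under.w]⟩

namespace CategoryTheory.Functor

variable {C : Type*} [Category C]

noncomputable def sectionsEquivOfIsInitial {i : C} (hi : IsInitial i) (G : C ⥤ Type*) :
    G.sections ≃ G.obj i where
  toFun s := s.1 i
  invFun x := ⟨fun c => G.map (hi.to c) x, fun f => by
    rw [← Functor.map_comp_apply, hi.hom_ext (hi.to _ ≫ f) (hi.to _)]⟩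
  left_inv s := Subtype.ext (funext fun c => s.2 (hi.to c))
  right_inv x := by simp

end CategoryTheory.Functor

namespace CategoryTheory.CategoryOfElements

variable {A C J : Type*} [Category A] [Category C] [Category J] (M : A ⥤ Type*)

def liftOfSections (F : C ⥤ A) (s : (F ⋙ M).sections) :
    {L : C ⥤ M.Elements // L ⋙ π M = F} :=
  ⟨{ obj c := ⟨F.obj c, s.1 c⟩
     map f := ⟨F.map f, s.2 f⟩ }, rfl⟩

theorem liftOfSections_bijective (F : C ⥤ A) : Function.Bijective (liftOfSections M F) := by
  refine ⟨fun s t hst => Subtype.ext (funext fun c => ?_), ?_⟩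
  · have := Functor.congr_obj (congrArg Subtype.val hst) c
    exact eq_of_heq (Sigma.mk.inj_iff.mp this).2
  · rintro ⟨L, rfl⟩
    exact ⟨⟨fun c => (L.obj c).2, fun f => (L.map f).2⟩, rfl⟩

def liftsPrecomp (S : J ⥤ C) (F : C ⥤ A) :
    {L : C ⥤ M.Elements // L ⋙ π M = F} → {K : J ⥤ M.Elements // K ⋙ π M = S ⋙ F} :=
  fun L => ⟨S ⋙ L.1, by rw [Functor.assoc, L.2]⟩

theorem liftsPrecomp_comp_liftOfSections (S : J ⥤ C) (F : C ⥤ A) :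
    liftsPrecomp M S F ∘ liftOfSections M F =
      liftOfSections M (S ⋙ F) ∘ S.sectionsPrecomp (P := F ⋙ M) :=
  rfl

theorem liftsPrecomp_bijective_iff (S : J ⥤ C) (F : C ⥤ A) :
    Function.Bijective (liftsPrecomp M S F) ↔
      Function.Bijective (S.sectionsPrecomp (P := F ⋙ M)) := by
  rw [← (liftOfSections_bijective M F).of_comp_iff, liftsPrecomp_comp_liftOfSections,
    (liftOfSections_bijective M (S ⋙ F)).of_comp_iff']

end CategoryTheory.CategoryOfElements

/-- `M` satisfies the limit-cone condition at a cone `S` with vertex `a` if and only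
if precomposition with `S` is a bijection from lifts of `Under.forget a` to lifts of
`S ⋙ Under.forget a` along the projection from the category of elements of `M`. -/
theorem isLimitCone_iff_liftsCones {A : Type*} [Category A] {J : Type*} [SmallCategory J]
    (M : A ⥤ Type*) (a : A) (S : J ⥤ Under a) :
    Function.Bijective (canonicalSectionsMap M S) ↔
      Function.Bijective
        (fun (L : {L : Under a ⥤ M.Elements // L ⋙ CategoryOfElements.π M = Under.forget a}) =>
          (⟨S ⋙ L.1, by rw [Functor.assoc, L.2]⟩ :
            {K : J ⥤ M.Elements // K ⋙ CategoryOfElements.π M = S ⋙ Under.forget a})) := by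
  let e := Functor.sectionsEquivOfIsInitial Under.mkIdInitial (Under.forget a ⋙ M)
  have hfactor : canonicalSectionsMap M S = fun m => S.sectionsPrecomp (e.symm m) := by
    funext m
    ext j
    exact congrArg (fun f => M.map f m) (Under.mkIdInitial_to_right (S.obj j)).symm
  rw [hfactor]
  exact ((Function.Bijective.of_comp_iff _ e.symm.bijective).trans
    (CategoryOfElements.liftsPrecomp_bijective_iff M S (Under.forget a)).symm)
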